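/- Let M, N be positive natural numbers and let d be a dataset of N instances with M binary protected attributes, where each instance carries both a true binary label and a predicted binary label. Suppose every vertex (level-0 hypercube) contains at least one instance. Then the minimum accuracy per level, Acc_min(K) = min over all hypercubes x of level K of Acc(x), is monotonically increasing in K, and the maximum accuracy per level, Acc_max(K) = max over all hypercubes x of level K of Acc(x), is monotonically decreasing in K: for every K with 1 ≤ K ≤ M, Acc_min(K-1) ≤ Acc_min(K) and Acc_max(K) ≤ Acc_max(K-1). -/

import Mathlib

/-- An attribute vector `v` belongs to the hypercube `x` if it matches all specified coordinates. -/
def Belongs {M : ℕ} (x : Fin M → Option Bool) (v : Fin M → Bool) : Prop :=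
  ∀ i : Fin M, ∀ b : Bool, x i = some b → v i = b

instance {M : ℕ} (x : Fin M → Option Bool) (v : Fin M → Bool) : Decidable (Belongs x v) := by
  unfold Belongs; infer_instance

/-- The level of a hypercube: the number of its stars (unspecified coordinates). -/
def level {M : ℕ} (x : Fin M → Option Bool) : ℕ :=
  (Finset.univ.filter fun i => x i = none).card

/-- The finset of all hypercubes of level `K`. -/
def levelSet (M K : ℕ) : Finset (Fin M → Option Bool) :=
  Finset.univ.filter fun x => level x = K

/-- N(x): the number of instances of the dataset `d` (with true and predicted labels)
whose attribute vector belongs to `x`. -/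
def cnt {M N : ℕ} (d : Fin N → (Fin M → Bool) × Bool × Bool) (x : Fin M → Option Bool) : ℕ :=
  (Finset.univ.filter fun n => Belongs x (d n).1).card

/-- The number of correctly classified instances (true label = predicted label) in `x`. -/
def cntCorrect {M N : ℕ} (d : Fin N → (Fin M → Bool) × Bool × Bool)
    (x : Fin M → Option Bool) : ℕ :=
  (Finset.univ.filter fun n => Belongs x (d n).1 ∧ (d n).2.1 = (d n).2.2).card

/-- The accuracy of hypercube `x`: Acc(x) = (number of correct instances in x)/N(x). -/
def accuracy {M N : ℕ} (d : Fin N → (Fin M → Bool) × Bool × Bool)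
    (x : Fin M → Option Bool) : ℚ :=
  (cntCorrect d x : ℚ) / (cnt d x : ℚ)

/-- Acc_min(K): minimum accuracy over all hypercubes of level `K`
(the level set is nonempty whenever `K ≤ M`, so the junk value `0` is never used there). -/
def accuracyMin {M N : ℕ} (d : Fin N → (Fin M → Bool) × Bool × Bool) (K : ℕ) : ℚ :=
  WithTop.untopD 0 (((levelSet M K).image (accuracy d)).min)

/-- Acc_max(K): maximum accuracy over all hypercubes of level `K`. -/
def accuracyMax {M N : ℕ} (d : Fin N → (Fin M → Bool) × Bool × Bool) (K : ℕ) : ℚ :=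
  WithBot.unbotD 0 (((levelSet M K).image (accuracy d)).max)

/-! Splitting a hypercube of level `K` along one of its stars yields two hypercubes of level
`K - 1` whose instances partition its own, so its accuracy is the mediant of theirs and lies
between the two. Since every vertex is nonempty, so is every hypercube, and the mediant is taken
over positive denominators. -/

open Finset

lemma add_div_add_mem_uIcc {α : Type*} [Field α] [LinearOrder α] [IsStrictOrderedRing α]
    {a b c d : α} (hc : 0 < c) (hd : 0 < d) : (a + b) / (c + d) ∈ Set.uIcc (a / c) (b / d) := by
  constructor
  · rw [le_div_iff₀ (add_pos hc hd), mul_add]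
    exact add_le_add ((le_div_iff₀ hc).1 inf_le_left) ((le_div_iff₀ hd).1 inf_le_right)
  · rw [div_le_iff₀ (add_pos hc hd), mul_add]
    exact add_le_add ((div_le_iff₀ hc).1 le_sup_left) ((div_le_iff₀ hd).1 le_sup_right)

lemma card_filter_eq_card_filter_false_add_card_filter_true {α : Type*} (s : Finset α)
    (p : α → Prop) [DecidablePred p] (f : α → Bool) :
    #(s.filter p) =
      #(s.filter fun a => p a ∧ f a = false) + #(s.filter fun a => p a ∧ f a = true) := by
  rw [← card_filter_add_card_filter_not (s := s.filter p) (fun a => f a = false)]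
  simp [filter_filter]

section Hypercube

variable {M : ℕ}

@[simp]
lemma mem_levelSet {K : ℕ} {x : Fin M → Option Bool} : x ∈ levelSet M K ↔ level x = K := by
  simp [levelSet]

lemma levelSet_nonempty {K : ℕ} (hK : K ≤ M) : (levelSet M K).Nonempty := by
  obtain ⟨s, -, hs⟩ := exists_subset_card_eq (s := (univ : Finset (Fin M))) (by simpa using hK)
  refine ⟨fun i => if i ∈ s then none else some false, ?_⟩
  simp [level, hs]

lemma exists_eq_none_of_level_pos {x : Fin M → Option Bool} (hx : 0 < level x) :
    ∃ j, x j = none := by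
  obtain ⟨j, hj⟩ := card_pos.1 hx
  exact ⟨j, (mem_filter.1 hj).2⟩

lemma level_update_some {x : Fin M → Option Bool} {j : Fin M} (hj : x j = none) (b : Bool) :
    level (Function.update x j (some b)) = level x - 1 := by
  have hstars : (univ.filter fun i => Function.update x j (some b) i = none)
      = (univ.filter fun i => x i = none).erase j := by
    ext i
    by_cases hij : i = j
    · subst hij; simp
    · simp [hij]
  rw [level, hstars, card_erase_of_mem (by simpa using hj), level]

lemma belongs_update_some {x : Fin M → Option Bool} {j : Fin M} (hj : x j = none) (b : Bool)
    (v : Fin M → Bool) :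
    Belongs (Function.update x j (some b)) v ↔ Belongs x v ∧ v j = b := by
  constructor
  · intro h
    refine ⟨fun i b' hi => h i b' ?_, h j b (by simp)⟩
    rwa [Function.update_of_ne (by rintro rfl; simp [hj] at hi)]
  · rintro ⟨hx, rfl⟩ i b' hi
    by_cases hij : i = j
    · subst hij; simpa using hi
    · exact hx i b' (by rwa [Function.update_of_ne hij] at hi)

end Hypercube

section Dataset

variable {M N : ℕ} (d : Fin N → (Fin M → Bool) × Bool × Bool)

lemma cnt_le_cnt_of_belongs {x y : Fin M → Option Bool} (h : ∀ v, Belongs y v → Belongs x v) :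
    cnt d y ≤ cnt d x :=
  card_le_card (monotone_filter_right _ fun _ _ => h _)

lemma cnt_pos (hvert : ∀ v : Fin M → Bool, 0 < cnt d (fun i => some (v i)))
    (x : Fin M → Option Bool) : 0 < cnt d x :=
  (hvert fun i => (x i).getD false).trans_le <|
    cnt_le_cnt_of_belongs d fun v hv i b hi => by simpa [hi] using hv i _ rfl

variable {x : Fin M → Option Bool} {j : Fin M}

lemma cnt_eq_add_of_eq_none (hj : x j = none) :
    cnt d x =
      cnt d (Function.update x j (some false)) + cnt d (Function.update x j (some true)) := by
  simp only [cnt, belongs_update_some hj]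
  exact card_filter_eq_card_filter_false_add_card_filter_true _ _ fun n => (d n).1 j

lemma cntCorrect_eq_add_of_eq_none (hj : x j = none) :
    cntCorrect d x = cntCorrect d (Function.update x j (some false))
      + cntCorrect d (Function.update x j (some true)) := by
  simp only [cntCorrect, belongs_update_some hj, and_right_comm]
  exact card_filter_eq_card_filter_false_add_card_filter_true _ _ fun n => (d n).1 j

lemma accuracy_mem_uIcc_of_eq_none (hvert : ∀ v : Fin M → Bool, 0 < cnt d (fun i => some (v i)))
    (hj : x j = none) :
    accuracy d x ∈ Set.uIcc (accuracy d (Function.update x j (some false)))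
      (accuracy d (Function.update x j (some true))) := by
  simp only [accuracy]
  rw [cnt_eq_add_of_eq_none d hj, cntCorrect_eq_add_of_eq_none d hj]
  push_cast
  exact add_div_add_mem_uIcc (mod_cast cnt_pos d hvert _) (mod_cast cnt_pos d hvert _)

lemma exists_levelSet_pred_accuracy_le_le
    (hvert : ∀ v : Fin M → Bool, 0 < cnt d (fun i => some (v i))) {K : ℕ} (hK : 1 ≤ K)
    (hx : x ∈ levelSet M K) :
    ∃ y ∈ levelSet M (K - 1), ∃ z ∈ levelSet M (K - 1),
      accuracy d y ≤ accuracy d x ∧ accuracy d x ≤ accuracy d z := by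
  rw [mem_levelSet] at hx
  obtain ⟨j, hj⟩ := exists_eq_none_of_level_pos (x := x) (by omega)
  have hchild (b : Bool) : Function.update x j (some b) ∈ levelSet M (K - 1) := by
    simp [level_update_some hj, hx]
  rcases Set.mem_uIcc.1 (accuracy_mem_uIcc_of_eq_none d hvert hj) with h | h
  · exact ⟨_, hchild false, _, hchild true, h⟩
  · exact ⟨_, hchild true, _, hchild false, h⟩

lemma accuracyMin_eq_inf' {K : ℕ} (h : (levelSet M K).Nonempty) :
    accuracyMin d K = (levelSet M K).inf' h (accuracy d) := by
  rw [accuracyMin, ← coe_min' (h.image _), WithTop.untopD_coe, min'_eq_inf', inf'_image]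
  rfl

lemma accuracyMax_eq_sup' {K : ℕ} (h : (levelSet M K).Nonempty) :
    accuracyMax d K = (levelSet M K).sup' h (accuracy d) := by
  rw [accuracyMax, ← coe_max' (h.image _), WithBot.unbotD_coe, max'_eq_sup', sup'_image]
  rfl

end Dataset

theorem accuracy_min_max_mono_general (M N : ℕ)
    (d : Fin N → (Fin M → Bool) × Bool × Bool)
    (hvert : ∀ v : Fin M → Bool, 0 < cnt d (fun i => some (v i)))
    (K : ℕ) (hK1 : 1 ≤ K) (hKM : K ≤ M) :
    accuracyMin d (K - 1) ≤ accuracyMin d K ∧ accuracyMax d K ≤ accuracyMax d (K - 1) := by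
  have hne := levelSet_nonempty hKM
  have hne_pred := levelSet_nonempty (M := M) (K := K - 1) (by omega)
  rw [accuracyMin_eq_inf' d hne, accuracyMin_eq_inf' d hne_pred, accuracyMax_eq_sup' d hne,
    accuracyMax_eq_sup' d hne_pred]
  constructor
  · refine le_inf' _ _ fun x hx => ?_
    obtain ⟨y, hy, -, -, hyx, -⟩ := exists_levelSet_pred_accuracy_le_le d hvert hK1 hx
    exact inf'_le_of_le _ hy hyx
  · refine sup'_le _ _ fun x hx => ?_
    obtain ⟨-, -, z, hz, -, hxz⟩ := exists_levelSet_pred_accuracy_le_le d hvert hK1 hx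
    exact le_sup'_of_le _ hz hxz

/-- If every vertex contains at least one instance, the minimum accuracy per
level is monotonically increasing and the maximum accuracy per level is monotonically
decreasing in the level. -/
theorem accuracy_min_max_mono (M N : ℕ) (hM : 0 < M) (hN : 0 < N)
    (d : Fin N → (Fin M → Bool) × Bool × Bool)
    (hvert : ∀ v : Fin M → Bool, 0 < cnt d (fun i => some (v i)))
    (K : ℕ) (hK1 : 1 ≤ K) (hKM : K ≤ M) :
    accuracyMin d (K - 1) ≤ accuracyMin d K ∧ accuracyMax d K ≤ accuracyMax d (K - 1) :=
  accuracy_min_max_mono_general M N d hvert K hK1 hKM
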